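/- Every submetry from R^n to R^k is, up to pre- and post-composition with isometries, the standard coordinate projection (y¹,…,y^n) ↦ (y¹,…,y^k). -/

import Mathlib

open Metric Filter Function MeasureTheory
open scoped Manifold Topology
open scoped RealInnerProductSpace

/-- `π : X → Y` is a submetry: for every `x ∈ X` and every `r > 0`,
`π(B̄_r(x)) = B̄_r(π(x))` (closed balls). -/
def IsSubmetry {X Y : Type*} [MetricSpace X] [MetricSpace Y] (π : X → Y) : Prop :=
  ∀ (x : X) (r : ℝ), 0 < r → π '' Metric.closedBall x r = Metric.closedBall (π x) r

/-!
A submetry `f` between real inner product spaces preserves midpoints, hence is affine. With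
`m = midpoint x y`, `c = midpoint (f x) (f y)` and `z = f m + t • (f m - c)`, lift `z` to `w` with
`dist m w ≤ dist (f m) z`; comparing Apollonius' identity for `w, x, y` with the one for
`z, f x, f y` gives `(4t + 2) dist (f m) c ² ≤ dist x y ² / 2` for all `t ≥ 0`, so `f m = c`.
The linear part `L` is 1-Lipschitz and every vector has a preimage under `L` of no larger norm,
which makes the adjoint of `L` a linear isometry `ℝᵏ → ℝⁿ`. Extending the image of the standard
basis under it to an orthonormal basis of `ℝⁿ` exhibits `L` as the coordinate projection in that
basis.
-/

namespace IsSubmetry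

section MetricSpace

variable {X Y Z : Type*} [MetricSpace X] [MetricSpace Y] [MetricSpace Z] {f : X → Y}

theorem exists_eq_dist_le (hf : IsSubmetry f) (x : X) (z : Y) :
    ∃ w, f w = z ∧ dist x w ≤ dist (f x) z := by
  rcases (dist_nonneg (x := f x) (y := z)).eq_or_lt with h | h
  · exact ⟨x, dist_eq_zero.1 h.symm, by simp [← h]⟩
  · have hz : z ∈ closedBall (f x) (dist (f x) z) := by simp [dist_comm]
    rw [← hf x _ h] at hz
    obtain ⟨w, hw, rfl⟩ := hz
    exact ⟨w, rfl, by simpa [dist_comm] using hw⟩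

theorem dist_le (hf : IsSubmetry f) (x y : X) : dist (f x) (f y) ≤ dist x y := by
  rcases (dist_nonneg (x := x) (y := y)).eq_or_lt with h | h
  · simp [dist_eq_zero.1 h.symm]
  · have hy : f y ∈ f '' closedBall x (dist x y) := Set.mem_image_of_mem f (by simp [dist_comm])
    rw [hf x _ h] at hy
    simpa [dist_comm] using hy

theorem lipschitzWith (hf : IsSubmetry f) : LipschitzWith 1 f :=
  LipschitzWith.of_dist_le_mul fun x y => by simpa using hf.dist_le x y

theorem isometryEquiv_comp (hf : IsSubmetry f) (e : Y ≃ᵢ Z) : IsSubmetry (e ∘ f) := by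
  intro x r hr
  rw [Set.image_comp, hf x r hr, e.image_closedBall, comp_apply]

end MetricSpace

section InnerProductSpace

variable {E F : Type*} [NormedAddCommGroup E] [InnerProductSpace ℝ E]
  [NormedAddCommGroup F] [InnerProductSpace ℝ F]

theorem map_midpoint {f : E → F} (hf : IsSubmetry f) (x y : E) :
    f (midpoint ℝ x y) = midpoint ℝ (f x) (f y) := by
  set m := midpoint ℝ x y
  set c := midpoint ℝ (f x) (f y)
  have key : ∀ t : ℝ, 0 ≤ t → (4 * t + 2) * dist (f m) c ^ 2 ≤ dist x y ^ 2 / 2 := by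
    intro t ht
    set z := f m + t • (f m - c)
    obtain ⟨w, hwz, hmw⟩ := hf.exists_eq_dist_le m z
    have hmz : dist (f m) z = t * dist (f m) c := by
      simp [z, dist_eq_norm, norm_smul, abs_of_nonneg ht]
    have hzc : dist z c = (1 + t) * dist (f m) c := by
      rw [dist_eq_norm, dist_eq_norm, show z - c = (1 + t) • (f m - c) by simp only [z]; module,
        norm_smul, Real.norm_of_nonneg (by positivity)]
    have hF : dist z (f x) ^ 2 + dist z (f y) ^ 2 =
        2 * (dist z c ^ 2 + (dist (f x) (f y) / 2) ^ 2) :=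
      EuclideanGeometry.dist_sq_add_dist_sq_eq_two_mul_dist_midpoint_sq_add_half_dist_sq _ _ _
    have hE : dist w x ^ 2 + dist w y ^ 2 = 2 * (dist w m ^ 2 + (dist x y / 2) ^ 2) :=
      EuclideanGeometry.dist_sq_add_dist_sq_eq_two_mul_dist_midpoint_sq_add_half_dist_sq _ _ _
    have hx : dist z (f x) ^ 2 ≤ dist w x ^ 2 := by
      gcongr; exact hwz ▸ hf.dist_le w x
    have hy : dist z (f y) ^ 2 ≤ dist w y ^ 2 := by
      gcongr; exact hwz ▸ hf.dist_le w y
    have hwm : dist w m ^ 2 ≤ (t * dist (f m) c) ^ 2 := by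
      gcongr; rwa [dist_comm, ← hmz]
    rw [hzc] at hF
    nlinarith [sq_nonneg (dist (f x) (f y))]
  by_contra hne
  have hpos : 0 < dist (f m) c := dist_pos.2 hne
  have := key (dist x y ^ 2 / dist (f m) c ^ 2) (by positivity)
  rw [add_mul, mul_assoc, div_mul_cancel₀ _ (by positivity)] at this
  nlinarith

theorem exists_linearMap_eq_add {f : E → F} (hf : IsSubmetry f) :
    ∃ L : E →ₗ[ℝ] F, ∀ x, f x = L x + f 0 := by
  let A := AffineMap.ofMapMidpoint f hf.map_midpoint hf.lipschitzWith.continuous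
  exact ⟨A.linear, fun x => congrFun A.decomp x⟩

theorem norm_adjoint_apply [FiniteDimensional ℝ E] [FiniteDimensional ℝ F] {L : E →ₗ[ℝ] F}
    (hL : IsSubmetry L) (v : F) : ‖L.adjoint v‖ = ‖v‖ := by
  have hle : ‖L.adjoint v‖ ≤ ‖v‖ := by
    have hLv : ‖L (L.adjoint v)‖ ≤ ‖L.adjoint v‖ := by simpa using hL.dist_le (L.adjoint v) 0
    have : ‖L.adjoint v‖ ^ 2 ≤ ‖v‖ * ‖L.adjoint v‖ := calc
      ‖L.adjoint v‖ ^ 2 = ⟪v, L (L.adjoint v)⟫ := by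
        rw [← LinearMap.adjoint_inner_left, real_inner_self_eq_norm_sq]
      _ ≤ ‖v‖ * ‖L (L.adjoint v)‖ := real_inner_le_norm _ _
      _ ≤ ‖v‖ * ‖L.adjoint v‖ := by gcongr
    nlinarith [norm_nonneg (L.adjoint v), norm_nonneg v]
  obtain ⟨w, rfl, hw⟩ := hL.exists_eq_dist_le 0 v
  simp only [map_zero, dist_zero_left] at hw
  have : ‖L w‖ ^ 2 ≤ ‖L.adjoint (L w)‖ * ‖L w‖ := calc
    ‖L w‖ ^ 2 = ⟪L.adjoint (L w), w⟫ := by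
      rw [LinearMap.adjoint_inner_left, real_inner_self_eq_norm_sq]
    _ ≤ ‖L.adjoint (L w)‖ * ‖w‖ := real_inner_le_norm _ _
    _ ≤ ‖L.adjoint (L w)‖ * ‖L w‖ := by gcongr
  exact hle.antisymm (by nlinarith [norm_nonneg (L.adjoint (L w)), norm_nonneg (L w)])

end InnerProductSpace

end IsSubmetry

theorem Orthonormal.exists_orthonormalBasis_extension_of_embedding {𝕜 E ι ι' : Type*} [RCLike 𝕜]
    [NormedAddCommGroup E] [InnerProductSpace 𝕜 E] [FiniteDimensional 𝕜 E] [Fintype ι']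
    (card_ι' : Module.finrank 𝕜 E = Fintype.card ι') {v : ι → E} (hv : Orthonormal 𝕜 v)
    (e : ι ↪ ι') : ∃ b : OrthonormalBasis ι' 𝕜 E, ∀ i, b (e i) = v i := by
  have hrestrict : (Set.range e).domRestrict (extend e v 0) =
      v ∘ (Equiv.ofInjective e e.injective).symm := by
    funext j
    obtain ⟨_, i, rfl⟩ := j
    simp [e.injective.extend_apply]
  obtain ⟨b, hb⟩ := Orthonormal.exists_orthonormalBasis_extension_of_card_eq card_ι'
    (hrestrict ▸ hv.comp _ (Equiv.injective _))
  exact ⟨b, fun i => (hb (e i) ⟨i, rfl⟩).trans (e.injective.extend_apply v 0 i)⟩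

/-- **Rigidity of Euclidean submetries.**  Every submetry from `ℝⁿ` to `ℝᵏ`
is, up to pre- and post-composition with isometries, the standard coordinate
projection `(y¹, …, yⁿ) ↦ (y¹, …, yᵏ)`. -/
theorem submetry_euclidean_rigidity (n k : ℕ) (hk : k ≤ n)
    (π : EuclideanSpace ℝ (Fin n) → EuclideanSpace ℝ (Fin k))
    (hπ : IsSubmetry π) :
    ∃ (e₁ : EuclideanSpace ℝ (Fin n) ≃ᵢ EuclideanSpace ℝ (Fin n))
      (e₂ : EuclideanSpace ℝ (Fin k) ≃ᵢ EuclideanSpace ℝ (Fin k)),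
      ∀ y : EuclideanSpace ℝ (Fin n),
        π y = e₂ (WithLp.toLp 2 (fun i : Fin k => e₁ y (Fin.castLE hk i))) := by
  obtain ⟨L, hL⟩ := hπ.exists_linearMap_eq_add
  have hLsub : IsSubmetry L := by
    have : ⇑L = IsometryEquiv.subRight (π 0) ∘ π := by funext y; simp [hL y]
    exact this ▸ hπ.isometryEquiv_comp _
  let J : EuclideanSpace ℝ (Fin k) →ₗᵢ[ℝ] EuclideanSpace ℝ (Fin n) :=
    ⟨L.adjoint, hLsub.norm_adjoint_apply⟩
  obtain ⟨b, hb⟩ := ((EuclideanSpace.basisFun (Fin k) ℝ).orthonormal.comp_linearIsometry J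
    ).exists_orthonormalBasis_extension_of_embedding (by simp) (Fin.castLEEmb hk)
  refine ⟨b.repr.toIsometryEquiv, IsometryEquiv.addRight (π 0), fun y => ?_⟩
  have hcoord : WithLp.toLp 2 (fun i => b.repr y (Fin.castLE hk i)) = L y := by
    ext i
    rw [PiLp.toLp_apply, b.repr_apply_apply, ← Fin.coe_castLEEmb, hb]
    simp [J, LinearMap.adjoint_inner_left, EuclideanSpace.inner_single_left]
  simp [hL y, hcoord]
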